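/- arXiv:2005.09340 — 9 statements merged into one kernel-verified Lean document; each statement's English description precedes it below -/
import Mathlib

section
/- Let A be an n×n column-stochastic matrix and let x, y ∈ ℝ^n satisfy A x = x and A y = y. Then the componentwise maximum x ⊔ y and the componentwise minimum x ⊓ y also satisfy A(x ⊔ y) = x ⊔ y and A(x ⊓ y) = x ⊓ y; that is, the set of fixed points of A is closed under componentwise max and min. -/
lemma mulVec_mono_aux {n : ℕ} (A : Matrix (Fin n) (Fin n) ℝ)
    (hnonneg : ∀ i j, 0 ≤ A i j) {u v : Fin n → ℝ} (h : ∀ j, u j ≤ v j) :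
    ∀ i, A.mulVec u i ≤ A.mulVec v i := by
  intro i
  simp only [Matrix.mulVec, dotProduct]
  apply Finset.sum_le_sum
  intro j _
  exact mul_le_mul_of_nonneg_left (h j) (hnonneg i j)

lemma sum_mulVec_eq {n : ℕ} (A : Matrix (Fin n) (Fin n) ℝ)
    (hcol : ∀ j, ∑ i, A i j = 1) (v : Fin n → ℝ) :
    ∑ i, A.mulVec v i = ∑ j, v j := by
  simp only [Matrix.mulVec, dotProduct]
  rw [Finset.sum_comm]
  simp [← Finset.sum_mul, hcol]

lemma eq_of_le_of_sum_eq {n : ℕ} {f g : Fin n → ℝ}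
    (h : ∀ i, f i ≤ g i) (hs : ∑ i, g i = ∑ i, f i) : g = f := by
  funext i
  exact (Finset.sum_eq_sum_iff_of_le (fun i _ => h i)).mp hs.symm i (Finset.mem_univ i) |>.symm

/-- The fixed points of a column-stochastic matrix are closed under
componentwise maximum `⊔` and componentwise minimum `⊓`. -/
theorem column_stochastic_fixed_points_lattice {n : ℕ}
    (A : Matrix (Fin n) (Fin n) ℝ)
    (hnonneg : ∀ i j, 0 ≤ A i j)
    (hcol : ∀ j, ∑ i, A i j = 1)
    (x y : Fin n → ℝ)
    (hx : A.mulVec x = x)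
    (hy : A.mulVec y = y) :
    A.mulVec (x ⊔ y) = x ⊔ y ∧ A.mulVec (x ⊓ y) = x ⊓ y := by
  constructor
  · have hle : ∀ i, (x ⊔ y) i ≤ A.mulVec (x ⊔ y) i := by
      intro i
      have hx' := mulVec_mono_aux A hnonneg (u := x) (v := x ⊔ y)
        (fun j => le_sup_left (b := y j)) i
      have hy' := mulVec_mono_aux A hnonneg (u := y) (v := x ⊔ y)
        (fun j => le_sup_right (a := x j)) i
      rw [hx] at hx'; rw [hy] at hy'
      exact sup_le hx' hy'
    have hs : ∑ i, A.mulVec (x ⊔ y) i = ∑ i, (x ⊔ y) i :=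
      sum_mulVec_eq A hcol _
    exact eq_of_le_of_sum_eq hle hs
  · have hle : ∀ i, A.mulVec (x ⊓ y) i ≤ (x ⊓ y) i := by
      intro i
      have hx' := mulVec_mono_aux A hnonneg (u := x ⊓ y) (v := x)
        (fun j => inf_le_left (b := y j)) i
      have hy' := mulVec_mono_aux A hnonneg (u := x ⊓ y) (v := y)
        (fun j => inf_le_right (a := x j)) i
      rw [hx] at hx'; rw [hy] at hy'
      exact le_inf hx' hy'
    have hs : ∑ i, (x ⊓ y) i = ∑ i, A.mulVec (x ⊓ y) i :=
      (sum_mulVec_eq A hcol _).symm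
    exact (eq_of_le_of_sum_eq hle hs).symm
end

section
/- Let A be an n×n column-stochastic matrix and b ∈ ℝ^n with b ≥ 0 componentwise. Then the set S = {x ∈ ℝ^n : 0 ≤ x ≤ b and A x = x} is nonempty and contains a greatest element x*, i.e., an element x* ∈ S such that x ≤ x* componentwise for every x ∈ S. -/
/-!
A column-stochastic matrix preserves coordinate sums and is monotone, so a vector `x ≤ A x`
must be a fixed point; hence the fixed points of `A` in the box `[0, b]` are closed under
componentwise maximum. This set is compact and contains `0`, and a maximiser of the coordinate
sum on it is its greatest element: for any `x` in the set, `x ⊔ z` lies in it too and would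
otherwise have a strictly larger sum.
-/

open Set Function Matrix

theorem supClosed_Icc {α : Type*} [SemilatticeSup α] (a b : α) : SupClosed (Icc a b) :=
  fun _ hx _ hy => ⟨le_sup_of_le_left hx.1, sup_le hx.2 hy.2⟩

theorem SupClosed.isGreatest_of_isMaxOn {α β : Type*} [SemilatticeSup α] [Preorder β]
    {s : Set α} {f : α → β} {z : α} (hs : SupClosed s) (hf : StrictMono f) (hz : z ∈ s)
    (hmax : IsMaxOn f s z) : IsGreatest s z := by
  refine ⟨hz, fun x hx => ?_⟩
  by_contra hxz
  have hlt : z < x ⊔ z := lt_of_le_of_ne le_sup_right fun h => hxz (h ▸ le_sup_left)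
  exact (hf hlt).not_ge (hmax (hs hx hz))

theorem IsCompact.exists_isGreatest_of_supClosed {ι : Type*} [Fintype ι] {s : Set (ι → ℝ)}
    (hs : IsCompact s) (hne : s.Nonempty) (hsup : SupClosed s) : ∃ z, IsGreatest s z := by
  obtain ⟨z, hz, hmax⟩ := hs.exists_isMaxOn hne
    (continuous_finsetSum _ fun i _ => continuous_apply i).continuousOn
  exact ⟨z, hsup.isGreatest_of_isMaxOn Fintype.sum_strictMono hz hmax⟩

namespace Matrix

variable {n R : Type*} [Fintype n]

theorem monotone_mulVec_of_nonneg {m : Type*} [Semiring R] [PartialOrder R] [IsOrderedRing R]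
    {A : Matrix m n R} (hA : ∀ i j, 0 ≤ A i j) : Monotone (A *ᵥ ·) :=
  fun _ _ hxy i => Finset.sum_le_sum fun j _ => mul_le_mul_of_nonneg_left (hxy j) (hA i j)

variable [DecidableEq n] [Ring R] [Lattice R] [IsOrderedRing R] {A : Matrix n n R}

theorem mulVec_eq_of_le_mulVec_of_mem_colStochastic (hA : A ∈ colStochastic R n) {x : n → R}
    (hx : x ≤ A *ᵥ x) : A *ᵥ x = x := by
  by_contra hne
  exact (Fintype.sum_strictMono (lt_of_le_of_ne hx (Ne.symm hne))).ne
    (sum_mulVec_of_mem_colStochastic hA).symm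

theorem supClosed_fixedPoints_mulVec_of_mem_colStochastic (hA : A ∈ colStochastic R n) :
    SupClosed (fixedPoints (A *ᵥ ·)) := by
  intro x hx y hy
  have hmono := monotone_mulVec_of_nonneg hA.1
  refine mulVec_eq_of_le_mulVec_of_mem_colStochastic hA (sup_le ?_ ?_)
  · exact hx.symm.trans_le (hmono le_sup_left)
  · exact hy.symm.trans_le (hmono le_sup_right)

end Matrix

/-- For a column-stochastic matrix `A` and a componentwise-nonnegative
vector `b`, the set `S = {x : 0 ≤ x ≤ b ∧ A x = x}` is nonempty and
contains a greatest element. -/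
theorem column_stochastic_greatest_constrained_fixed_point {n : ℕ}
    (A : Matrix (Fin n) (Fin n) ℝ)
    (hnonneg : ∀ i j, 0 ≤ A i j)
    (hcol : ∀ j, ∑ i, A i j = 1)
    (b : Fin n → ℝ) (hb : 0 ≤ b) :
    ∃ xstar : Fin n → ℝ,
      (0 ≤ xstar ∧ xstar ≤ b ∧ A.mulVec xstar = xstar) ∧
      ∀ x : Fin n → ℝ, 0 ≤ x → x ≤ b → A.mulVec x = x → x ≤ xstar := by
  have hA : A ∈ colStochastic ℝ (Fin n) := mem_colStochastic_iff_sum.2 ⟨hnonneg, hcol⟩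
  set S := Icc 0 b ∩ fixedPoints (A *ᵥ ·)
  have hcompact : IsCompact S :=
    isCompact_Icc.inter_right (isClosed_fixedPoints (continuous_const.matrix_mulVec continuous_id))
  have hzero : (0 : Fin n → ℝ) ∈ S := ⟨⟨le_rfl, hb⟩, mulVec_zero A⟩
  obtain ⟨z, ⟨⟨hz0, hzb⟩, hzA⟩, hzmax⟩ := hcompact.exists_isGreatest_of_supClosed ⟨0, hzero⟩
    ((supClosed_Icc 0 b).inter (supClosed_fixedPoints_mulVec_of_mem_colStochastic hA))
  exact ⟨z, ⟨hz0, hzb, hzA⟩, fun x hx0 hxb hxA => hzmax ⟨⟨hx0, hxb⟩, hxA⟩⟩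
end

section
/- Let O be a finite nonempty set, ≿ a total preorder on O, and l, l' ∈ ℝ_{≥0}^O two lotteries. Then l ≿^sd l' and l' ≿^sd l hold simultaneously if and only if for every o ∈ O, Σ_{o' : o' ~ o} l_{o'} = Σ_{o' : o' ~ o} l'_{o'}, i.e., l and l' place the same total probability on every indifference class of ≿. -/
open Finset

/-- Lottery `l` weakly stochastically dominates `l'` with respect to the
preference (total preorder) `R`. -/
def SDom {O : Type*} [Fintype O] (R : O → O → Prop) [DecidableRel R]
    (l l' : O → ℝ) : Prop :=
  ∀ o : O,
    ∑ o' ∈ univ.filter (fun o' => R o' o), l' o' ≤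
      ∑ o' ∈ univ.filter (fun o' => R o' o), l o'

private lemma exists_top' {O : Type*} {R : O → O → Prop}
    (htotal : Total R) (htrans : Transitive R)
    (s : Finset O) (hs : s.Nonempty) : ∃ w ∈ s, ∀ x ∈ s, R x w := by
  classical
  induction s using Finset.induction_on with
  | empty => exact absurd hs (by simp)
  | @insert a s ha ih =>
    rcases s.eq_empty_or_nonempty with rfl | hsn
    · exact ⟨a, by simp, by simpa using (htotal a a).elim id id⟩
    · obtain ⟨w, hw, hwmax⟩ := ih hsn
      rcases htotal a w with h | h
      · refine ⟨w, mem_insert_of_mem hw, fun x hx => ?_⟩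
        rcases mem_insert.1 hx with rfl | hx
        · exact h
        · exact hwmax x hx
      · refine ⟨a, mem_insert_self a s, fun x hx => ?_⟩
        rcases mem_insert.1 hx with rfl | hx
        · exact (htotal x x).elim id id
        · exact htrans (hwmax x hx) h

/-- Two lotteries weakly stochastically dominate each other (with respect to
a total preorder) if and only if they place the same total probability on
every indifference class. -/
theorem sd_equiv_iff_equal_on_indifference_classes
    {O : Type*} [Fintype O] [Nonempty O]
    (R : O → O → Prop) [DecidableRel R]
    (htotal : Total R) (htrans : Transitive R)
    (l l' : O → ℝ)
    (hl : ∀ o, 0 ≤ l o) (hl' : ∀ o, 0 ≤ l' o) :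
    (SDom R l l' ∧ SDom R l' l) ↔
      ∀ o : O,
        ∑ o' ∈ univ.filter (fun o' => R o' o ∧ R o o'), l o' =
          ∑ o' ∈ univ.filter (fun o' => R o' o ∧ R o o'), l' o' := by
  classical
  have hrefl : ∀ x, R x x := fun x => (htotal x x).elim id id
  -- split a lower-set sum into indifference class + strict lower set
  have hsplit : ∀ (f : O → ℝ) (o : O),
      ∑ o' ∈ univ.filter (fun o' => R o' o), f o' =
        (∑ o' ∈ univ.filter (fun o' => R o' o ∧ R o o'), f o') +
          ∑ o' ∈ univ.filter (fun o' => ¬ R o o'), f o' := by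
    intro f o
    rw [← Finset.sum_filter_add_sum_filter_not (univ.filter (fun o' => R o' o))
      (fun o' => R o o') f]
    congr 1
    · rw [Finset.filter_filter]
    · rw [Finset.filter_filter]
      refine Finset.sum_congr (Finset.filter_congr fun o' _ => ?_) (fun _ _ => rfl)
      constructor
      · exact fun h => h.2
      · exact fun h => ⟨(htotal o' o).elim id (fun h' => absurd h' h), h⟩
  -- the strict lower set, if nonempty, is a lower set
  have hS_eq : ∀ o : O, (univ.filter (fun o' => ¬ R o o')).Nonempty →
      ∃ w, univ.filter (fun o' => ¬ R o o') = univ.filter (fun o' => R o' w) := by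
    intro o hne
    obtain ⟨w, hw, hwmax⟩ := exists_top' htotal htrans _ hne
    have hnow : ¬ R o w := (mem_filter.1 hw).2
    refine ⟨w, ?_⟩
    ext o'
    simp only [mem_filter, mem_univ, true_and]
    constructor
    · intro h
      exact hwmax o' (mem_filter.2 ⟨mem_univ _, h⟩)
    · intro h ho
      exact hnow (htrans ho h)
  -- strict lower set is strictly contained in lower set
  have hSlt : ∀ o : O, (univ.filter (fun o' => ¬ R o o')).card <
      (univ.filter (fun o' => R o' o)).card := by
    intro o
    apply Finset.card_lt_card
    constructor
    · intro x hx
      have hx' := (mem_filter.1 hx).2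
      exact mem_filter.2 ⟨mem_univ _, (htotal x o).elim id (fun h => absurd h hx')⟩
    · intro hall
      have ho : o ∈ univ.filter (fun o' => R o' o) := mem_filter.2 ⟨mem_univ _, hrefl o⟩
      exact (mem_filter.1 (hall ho)).2 (hrefl o)
  -- equivalence of mutual domination with equality of lower-set sums
  have hiff : (SDom R l l' ∧ SDom R l' l) ↔
      ∀ o : O, ∑ o' ∈ univ.filter (fun o' => R o' o), l o' =
        ∑ o' ∈ univ.filter (fun o' => R o' o), l' o' := by
    constructor
    · rintro ⟨h1, h2⟩ o
      exact le_antisymm (h2 o) (h1 o)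
    · intro h
      exact ⟨fun o => (h o).ge, fun o => (h o).le⟩
  rw [hiff]
  constructor
  · -- forward: equal lower-set sums → equal indifference-class sums
    intro H o
    have h1 := hsplit l o
    have h2 := hsplit l' o
    have h3 := H o
    have hS : ∑ o' ∈ univ.filter (fun o' => ¬ R o o'), l o' =
        ∑ o' ∈ univ.filter (fun o' => ¬ R o o'), l' o' := by
      rcases (univ.filter (fun o' => ¬ R o o')).eq_empty_or_nonempty with he | hne
      · rw [he]; simp
      · obtain ⟨w, hw⟩ := hS_eq o hne
        rw [hw]; exact H w
    linarith
  · -- backward: equal indifference sums → equal lower-set sums (strong induction)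
    intro H
    have key : ∀ n : ℕ, ∀ o : O, (univ.filter (fun o' => R o' o)).card ≤ n →
        ∑ o' ∈ univ.filter (fun o' => R o' o), l o' =
          ∑ o' ∈ univ.filter (fun o' => R o' o), l' o' := by
      intro n
      induction n with
      | zero =>
        intro o h
        exfalso
        have ho : o ∈ univ.filter (fun o' => R o' o) := mem_filter.2 ⟨mem_univ _, hrefl o⟩
        have := Finset.card_pos.2 ⟨o, ho⟩
        omega
      | succ n ih =>
        intro o h
        rw [hsplit l o, hsplit l' o, H o]
        congr 1
        rcases (univ.filter (fun o' => ¬ R o o')).eq_empty_or_nonempty with he | hne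
        · rw [he]; simp
        · obtain ⟨w, hw⟩ := hS_eq o hne
          rw [hw]
          apply ih
          have := hSlt o
          rw [hw] at this
          omega
    intro o
    exact key _ o le_rfl
end

section
/- Let O be a finite nonempty set, ≿ a total preorder on O, and l, l' ∈ ℝ_{≥0}^O two lotteries with equal total mass Σ_o l_o = Σ_o l'_o. Then l ≿^sd l' if and only if there exists a nonnegative coupling T ∈ ℝ_{≥0}^{O×O} such that (i) Σ_{b ∈ O} T_{a,b} = l'_a for every a ∈ O, (ii) Σ_{a ∈ O} T_{a,b} = l_b for every b ∈ O, and (iii) T_{a,b} > 0 implies b ≿ a. That is, l stochastically dominates l' exactly when l can be obtained from l' by transferring probability mass only from objects to weakly preferred objects. -/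
open Finset

/-!
Refine `≿` to a linear order that lists better objects first and lay the masses of `l'` and of
`l` out, in that order, as consecutive intervals of `[0, m]`, where `m` is the common total mass.
The quantile coupling moves from `a` to `b` the length of the overlap of the `l'`-interval of `a`
with the `l`-interval of `b`; its marginals are `l'` and `l` because each family of intervals tiles
`[0, m]`. If it moves mass from `a` to `b`, the `l`-interval of `b` starts before the `l'`-interval
of `a` ends; as upper sets of `≿` contain the initial segments of the refinement, dominance then
forces `b ≿ a`. Conversely, a monotone coupling moves the `l'`-mass of every upper set into that
upper set.
-/

theorem Finset.sum_sub_prefix_telescope {ι M G : Type*} [LinearOrder ι] [AddCommMonoid M]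
    [AddCommGroup G] (s : Finset ι) (f : ι → M) (φ : M → G) :
    ∑ i ∈ s, (φ (∑ x ∈ s with x ≤ i, f x) - φ (∑ x ∈ s with x < i, f x)) =
      φ (∑ x ∈ s, f x) - φ 0 := by
  induction s using Finset.induction_on_max with
  | empty => simp
  | insert a s hlt ih =>
    have ha : a ∉ s := fun h => lt_irrefl a (hlt a h)
    have hle_a : {x ∈ insert a s | x ≤ a} = insert a s :=
      filter_true_of_mem fun x hx => by
        rcases mem_insert.1 hx with rfl | hx
        exacts [le_rfl, (hlt x hx).le]
    have hlt_a : {x ∈ insert a s | x < a} = s := by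
      rw [filter_insert, if_neg (lt_irrefl a), filter_true_of_mem hlt]
    have hprefix : ∀ i ∈ s, {x ∈ insert a s | x ≤ i} = {x ∈ s | x ≤ i} ∧
        {x ∈ insert a s | x < i} = {x ∈ s | x < i} := fun i hi => by
      simp only [filter_insert, if_neg (hlt i hi).not_ge, if_neg (hlt i hi).not_gt, and_self]
    have hrest : ∑ i ∈ s, (φ (∑ x ∈ insert a s with x ≤ i, f x) -
        φ (∑ x ∈ insert a s with x < i, f x)) = φ (∑ x ∈ s, f x) - φ 0 := by
      rw [← ih]
      exact sum_congr rfl fun i hi => by rw [(hprefix i hi).1, (hprefix i hi).2]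
    rw [sum_insert ha, hle_a, hlt_a, hrest]
    abel

noncomputable def overlapLength (a b c d : ℝ) : ℝ := max (min b d - max a c) 0

lemma overlapLength_nonneg (a b c d : ℝ) : 0 ≤ overlapLength a b c d := le_max_right _ _

lemma overlapLength_comm (a b c d : ℝ) : overlapLength a b c d = overlapLength c d a b := by
  rw [overlapLength, overlapLength, min_comm, max_comm a]

lemma lt_of_overlapLength_pos {a b c d : ℝ} (h : 0 < overlapLength a b c d) : c < b := by
  by_contra! hbc
  have : min b d - max a c ≤ 0 := by linarith [min_le_left b d, le_max_right a c]
  rw [overlapLength, max_eq_right this] at h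
  exact h.false

lemma overlapLength_eq_sub_clamp {a b c d : ℝ} (hab : a ≤ b) (hcd : c ≤ d) :
    overlapLength a b c d = min d (max c b) - min d (max c a) := by
  simp only [overlapLength, min_def, max_def]
  split_ifs <;> linarith

section QuantileCoupling

variable {ι : Type*} [Fintype ι] [LinearOrder ι] {f g : ι → ℝ}

lemma sum_filter_le_eq_sum_filter_lt_add (f : ι → ℝ) (i : ι) :
    ∑ x with x ≤ i, f x = ∑ x with x < i, f x + f i := by
  have : ({x | x ≤ i} : Finset ι) = insert i ({x | x < i} : Finset ι) := by
    ext x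
    simp [le_iff_lt_or_eq, or_comm]
  rw [this, sum_insert (by simp), add_comm]

lemma sum_overlapLength_prefix (hf : ∀ x, 0 ≤ f x) {c d : ℝ} (hc : 0 ≤ c) (hcd : c ≤ d)
    (hd : d ≤ ∑ x, f x) :
    ∑ j, overlapLength (∑ x with x < j, f x) (∑ x with x ≤ j, f x) c d = d - c := by
  have hmono (j : ι) : ∑ x with x < j, f x ≤ ∑ x with x ≤ j, f x :=
    sum_le_sum_of_subset_of_nonneg (monotone_filter_right _ fun _ _ => le_of_lt)
      fun x _ _ => hf x
  simp_rw [overlapLength_eq_sub_clamp (hmono _) hcd]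
  rw [sum_sub_prefix_telescope univ f (fun t => min d (max c t)), max_eq_left hc,
    min_eq_right hcd, max_eq_right (hcd.trans hd), min_eq_left hd]

noncomputable def quantileCoupling (f g : ι → ℝ) (i j : ι) : ℝ :=
  overlapLength (∑ x with x < i, g x) (∑ x with x ≤ i, g x)
    (∑ x with x < j, f x) (∑ x with x ≤ j, f x)

lemma quantileCoupling_nonneg (i j : ι) : 0 ≤ quantileCoupling f g i j :=
  overlapLength_nonneg _ _ _ _

lemma sum_quantileCoupling_right (hf : ∀ x, 0 ≤ f x) (hg : ∀ x, 0 ≤ g x)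
    (hfg : ∑ x, f x = ∑ x, g x) (i : ι) : ∑ j, quantileCoupling f g i j = g i := by
  simp_rw [quantileCoupling, overlapLength_comm (∑ x with x < i, g x)]
  rw [sum_overlapLength_prefix hf (sum_nonneg fun x _ => hg x)
    (by rw [sum_filter_le_eq_sum_filter_lt_add]; linarith [hg i])
    (hfg ▸ sum_le_univ_sum_of_nonneg hg), sum_filter_le_eq_sum_filter_lt_add]
  ring

lemma sum_quantileCoupling_left (hf : ∀ x, 0 ≤ f x) (hg : ∀ x, 0 ≤ g x)
    (hfg : ∑ x, f x = ∑ x, g x) (j : ι) : ∑ i, quantileCoupling f g i j = f j := by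
  unfold quantileCoupling
  rw [sum_overlapLength_prefix hg (sum_nonneg fun x _ => hf x)
    (by rw [sum_filter_le_eq_sum_filter_lt_add]; linarith [hf j])
    (hfg ▸ sum_le_univ_sum_of_nonneg hf), sum_filter_le_eq_sum_filter_lt_add]
  ring

lemma lt_of_quantileCoupling_pos {i j : ι} (h : 0 < quantileCoupling f g i j) :
    ∑ x with x < j, f x < ∑ x with x ≤ i, g x :=
  lt_of_overlapLength_pos h

end QuantileCoupling

section TotalPreorder

variable {α : Type*} [Fintype α] {R : α → α → Prop}

lemma rel_of_card_filter_le (htotal : Total R) (htrans : Transitive R) [DecidableRel R]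
    {x y : α} (h : #{z | R z x} ≤ #{z | R z y}) : R x y := by
  by_contra hxy
  have hyx : R y x := (htotal x y).resolve_left hxy
  have hssub : ({z | R z y} : Finset α) ⊂ ({z | R z x} : Finset α) := by
    refine (ssubset_iff_of_subset fun z hz => ?_).2 ⟨x, ?_, ?_⟩
    · simp only [mem_filter, mem_univ, true_and] at hz ⊢
      exact htrans hz hyx
    · simpa using (htotal x x).elim id id
    · simpa using hxy
  exact (card_lt_card hssub).not_ge h

theorem exists_linearOrder_le_imp_rel (htotal : Total R) (htrans : Transitive R) :
    ∃ _ : LinearOrder α, ∀ x y : α, x ≤ y → R x y := by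
  classical
  -- rank objects by how many objects are weakly preferred to them, breaking ties arbitrarily
  let key (o : α) : ℕ ×ₗ Fin (Fintype.card α) := toLex (#{z | R z o}, Fintype.equivFin α o)
  have hkey : Function.Injective key := fun x y h =>
    (Fintype.equivFin α).injective (congrArg (fun p => (ofLex p).2) h)
  exact ⟨LinearOrder.lift' key hkey, fun x y hxy =>
    rel_of_card_filter_le htotal htrans (Prod.Lex.monotone_fst _ _ hxy)⟩

variable [DecidableRel R] {l l' : α → ℝ}

theorem rel_of_quantileCoupling_pos [LinearOrder α] (htrans : Transitive R)
    (hle : ∀ x y : α, x ≤ y → R x y) (hl : ∀ o, 0 ≤ l o) (hl' : ∀ o, 0 ≤ l' o)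
    (hsd : SDom R l l') {a b : α} (h : 0 < quantileCoupling l l' a b) : R b a := by
  by_contra hba
  have hupper : ∑ x with x ≤ a, l' x ≤ ∑ x with R x a, l' x :=
    sum_le_sum_of_subset_of_nonneg (monotone_filter_right _ fun x _ => hle x a)
      fun x _ _ => hl' x
  have hlower : ∑ x with R x a, l x ≤ ∑ x with x < b, l x :=
    sum_le_sum_of_subset_of_nonneg (monotone_filter_right _ fun x _ hxa => lt_of_not_ge
      fun hbx => hba (htrans (hle b x hbx) hxa)) fun x _ _ => hl x
  exact (lt_of_quantileCoupling_pos h).not_ge (hupper.trans ((hsd a).trans hlower))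

theorem sdom_of_coupling (htrans : Transitive R) {T : α → α → ℝ} (hT : ∀ a b, 0 ≤ T a b)
    (hrow : ∀ a, ∑ b, T a b = l' a) (hcol : ∀ b, ∑ a, T a b = l b)
    (hmono : ∀ a b, 0 < T a b → R b a) : SDom R l l' := by
  intro o
  have hrow_upper (x : α) (hxo : R x o) : ∑ b with R b o, T x b = l' x := by
    rw [← hrow x]
    exact sum_filter_of_ne fun b _ hb => htrans (hmono x b ((hT x b).lt_of_ne' hb)) hxo
  calc ∑ x with R x o, l' x
      = ∑ x with R x o, ∑ b with R b o, T x b :=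
        sum_congr rfl fun x hx => (hrow_upper x (mem_filter.1 hx).2).symm
    _ ≤ ∑ x, ∑ b with R b o, T x b :=
        sum_le_univ_sum_of_nonneg fun x => sum_nonneg fun b _ => hT x b
    _ = ∑ b with R b o, l b := by
        rw [sum_comm]
        exact sum_congr rfl fun b _ => hcol b

end TotalPreorder

theorem sd_iff_monotone_coupling_general {O : Type*} [Fintype O]
    (R : O → O → Prop) [DecidableRel R]
    (htotal : Total R) (htrans : Transitive R)
    (l l' : O → ℝ)
    (hl : ∀ o, 0 ≤ l o) (hl' : ∀ o, 0 ≤ l' o)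
    (hmass : ∑ o, l o = ∑ o, l' o) :
    SDom R l l' ↔
      ∃ T : O → O → ℝ,
        (∀ a b, 0 ≤ T a b) ∧
        (∀ a, ∑ b, T a b = l' a) ∧
        (∀ b, ∑ a, T a b = l b) ∧
        (∀ a b, 0 < T a b → R b a) := by
  constructor
  · intro hsd
    obtain ⟨_, hle⟩ := exists_linearOrder_le_imp_rel htotal htrans
    exact ⟨quantileCoupling l l', quantileCoupling_nonneg, sum_quantileCoupling_right hl hl' hmass,
      sum_quantileCoupling_left hl hl' hmass,
      fun a b h => rel_of_quantileCoupling_pos htrans hle hl hl' hsd h⟩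
  · rintro ⟨T, hT, hrow, hcol, hmono⟩
    exact sdom_of_coupling htrans hT hrow hcol hmono

/-- For lotteries of equal total mass, `l` stochastically dominates `l'`
(with respect to a total preorder `R`) if and only if `l` can be obtained from
`l'` by a nonnegative coupling `T` that transfers probability mass only from
objects to weakly preferred objects: row sums of `T` are `l'`, column sums
are `l`, and `T a b > 0` implies `b ≿ a`. -/
theorem sd_iff_monotone_coupling {O : Type*} [Fintype O] [Nonempty O]
    (R : O → O → Prop) [DecidableRel R]
    (htotal : Total R) (htrans : Transitive R)
    (l l' : O → ℝ)
    (hl : ∀ o, 0 ≤ l o) (hl' : ∀ o, 0 ≤ l' o)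
    (hmass : ∑ o, l o = ∑ o, l' o) :
    SDom R l l' ↔
      ∃ T : O → O → ℝ,
        (∀ a b, 0 ≤ T a b) ∧
        (∀ a, ∑ b, T a b = l' a) ∧
        (∀ b, ∑ a, T a b = l b) ∧
        (∀ a b, 0 < T a b → R b a) :=
  sd_iff_monotone_coupling_general R htotal htrans l l' hl hl' hmass
end

section
/- Let I and O be finite nonempty sets, with each agent i ∈ I having a total preorder ≿_i on O. Let p, p' ∈ ℝ_{≥0}^{I×O} satisfy Σ_{o∈O} p'_{i,o} = Σ_{o∈O} p_{i,o} for every i ∈ I and Σ_{i∈I} p'_{i,o} = Σ_{i∈I} p_{i,o} for every o ∈ O. Suppose p'_i ≿^sd_i p_i for every i and there exists j with p'_j ≻^sd_j p_j. Then there exist k ≥ 2, agents i_1,…,i_k ∈ I (not necessarily distinct) and objects o_1,…,o_k ∈ O such that, with indices taken modulo k: p_{i_t,o_t} > 0 and o_{t+1} ≿_{i_t} o_t for every t ∈ {1,…,k}, and o_{t+1} ≻_{i_t} o_t for at least one t. That is, any strict stochastic-dominance improvement that preserves each agent's total and each object's total usage gives rise to an improving trading cycle among positive consumptions. -/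
/-!
Write `δ = p' - p`. Every object whose column of `δ` has a positive entry also has a negative
one, and an agent losing mass on `a` must, by weak stochastic dominance, gain mass on some `b`
it weakly prefers to `a`; following such trades forever and stopping at the first repeated
object yields a closed walk of trades through positive entries of `p`. If one trade on it is
strict, this is the improving cycle. Otherwise all its trades are indifferences, and undoing
the cycle by the largest amount that keeps every sign of `δ` changes neither the column sums
nor any agent's upper-contour sums, while it makes one more entry of `δ` vanish; since the
strict gain of the strict agent survives, induction on the support of `δ` concludes.
-/

open Finset

/-- Lottery `l` strictly stochastically dominates `l'` with respect to `R`. -/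
def SSDom {O : Type*} [Fintype O] (R : O → O → Prop) [DecidableRel R]
    (l l' : O → ℝ) : Prop :=
  SDom R l l' ∧
    ∃ o : O,
      ∑ o' ∈ univ.filter (fun o' => R o' o), l' o' <
        ∑ o' ∈ univ.filter (fun o' => R o' o), l o'

theorem exists_seq_of_forall_exists_rel {α : Type*} {P : α → Prop} {r : α → α → Prop}
    (h : ∀ a, P a → ∃ b, P b ∧ r a b) {a : α} (ha : P a) :
    ∃ f : ℕ → α, ∀ n, r (f n) (f (n + 1)) := by
  choose! next hnextP hnext using h
  have hP : ∀ n, P (next^[n] a) := fun n => by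
    induction n with
    | zero => exact ha
    | succ n ih => rw [Function.iterate_succ_apply']; exact hnextP _ ih
  refine ⟨fun n => next^[n] a, fun n => ?_⟩
  simp only [Function.iterate_succ_apply']
  exact hnext _ (hP n)

/-- The ratio test of the simplex method: move `δ` along a direction `c` of opposite sign
until the first coordinate hits zero. -/
theorem exists_support_add_mul_ssubset {X : Type*} [Finite X] {δ c : X → ℝ}
    (hpos : ∀ x, 0 < c x → δ x < 0) (hneg : ∀ x, c x < 0 → 0 < δ x) (hc : c ≠ 0) :
    ∃ ε : ℝ, (∀ x, δ x + ε * c x < 0 → δ x < 0) ∧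
      Function.support (fun x => δ x + ε * c x) ⊂ Function.support δ := by
  have hδ : ∀ x, c x ≠ 0 → δ x ≠ 0 := fun x hcx =>
    hcx.lt_or_gt.elim (fun h => (hneg x h).ne') fun h => (hpos x h).ne
  obtain ⟨x₀, hx₀, hmin⟩ := (Function.support c).toFinite.toFinset.exists_min_image
    (fun x => -δ x / c x) (by simpa [Function.support_nonempty_iff] using hc)
  simp only [Set.Finite.mem_toFinset, Function.mem_support] at hx₀ hmin
  refine ⟨-δ x₀ / c x₀, fun x hx => ?_, ?_⟩
  · by_contra hδx
    rcases lt_trichotomy (c x) 0 with hcx | hcx | hcx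
    · have := (le_div_iff_of_neg hcx).1 (hmin x hcx.ne)
      linarith
    · rw [hcx, mul_zero, add_zero] at hx
      exact hδx hx
    · exact hδx (hpos x hcx)
  · have hsub : Function.support (fun x => δ x + -δ x₀ / c x₀ * c x) ⊆ Function.support δ := by
      intro x hx hδx
      have hcx : c x = 0 := by_contra fun hcx => hδ x hcx hδx
      simp [hcx, hδx] at hx
    refine (Set.ssubset_iff_of_subset hsub).2 ⟨x₀, hδ x₀ hx₀, ?_⟩
    simp [div_mul_cancel₀ _ hx₀]

section UpperSum

variable {O : Type*} [Fintype O] (R : O → O → Prop) [DecidableRel R]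

def upperSum (l : O → ℝ) (o : O) : ℝ :=
  ∑ o' ∈ univ.filter (fun o' => R o' o), l o'

theorem upperSum_sub (l l' : O → ℝ) (o : O) :
    upperSum R (l - l') o = upperSum R l o - upperSum R l' o :=
  Finset.sum_sub_distrib ..

theorem upperSum_add_mul (l m : O → ℝ) (ε : ℝ) (o : O) :
    upperSum R (fun o' => l o' + ε * m o') o = upperSum R l o + ε * upperSum R m o := by
  simp only [upperSum, Finset.sum_add_distrib, Finset.mul_sum]

end UpperSum

section TradingWalk

variable {I O : Type*} (R : I → O → O → Prop)

def HasImprovingCycle (p : I → O → ℝ) : Prop :=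
  ∃ (k : ℕ), 2 ≤ k ∧ ∃ (ag : ℕ → I) (ob : ℕ → O),
    (∀ t < k, 0 < p (ag t) (ob t) ∧ R (ag t) (ob ((t + 1) % k)) (ob t)) ∧
    (∃ t < k, R (ag t) (ob ((t + 1) % k)) (ob t) ∧ ¬ R (ag t) (ob t) (ob ((t + 1) % k)))

structure IsTrade (δ : I → O → ℝ) (i : I) (a b : O) : Prop where
  neg : δ i a < 0
  pos : 0 < δ i b
  pref : R i b a

def IsTradingWalk (δ : I → O → ℝ) (G : ℕ → I) (F : ℕ → O) : Prop :=
  ∀ t, IsTrade R δ (G t) (F t) (F (t + 1))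

variable {R} {δ : I → O → ℝ} {G : ℕ → I} {F : ℕ → O}

theorem IsTradingWalk.exists_closed [Finite O] (hwalk : IsTradingWalk R δ G F) :
    ∃ (G' : ℕ → I) (F' : ℕ → O) (k : ℕ), 0 < k ∧ F' k = F' 0 ∧ IsTradingWalk R δ G' F' := by
  obtain ⟨m, n, hmn, hF⟩ := Finite.exists_ne_map_eq_of_infinite F
  wlog hlt : m < n generalizing m n
  · exact this n m hmn.symm hF.symm (hmn.lt_or_gt.resolve_left hlt)
  refine ⟨fun t => G (m + t), fun t => F (m + t), n - m, by omega, ?_, fun t => hwalk (m + t)⟩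
  simp only [add_zero, Nat.add_sub_cancel' hlt.le, hF]

theorem IsTradingWalk.hasImprovingCycle {p : I → O → ℝ} (hwalk : IsTradingWalk R δ G F)
    (hp : ∀ i o, δ i o < 0 → 0 < p i o) {k : ℕ} (hFk : F k = F 0) {t : ℕ} (ht : t < k)
    (hstrict : ¬ R (G t) (F t) (F (t + 1))) : HasImprovingCycle R p := by
  have hmod : ∀ s < k, F ((s + 1) % k) = F (s + 1) := fun s hs => by
    rcases (show s + 1 ≤ k by omega).eq_or_lt with h | h
    · rw [h, Nat.mod_self, hFk]
    · rw [Nat.mod_eq_of_lt h]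
  have hk : 2 ≤ k := by
    by_contra! hk
    obtain rfl : t = 0 := by omega
    obtain rfl : k = 1 := by omega
    exact hstrict (hFk ▸ (hwalk 0).pref)
  refine ⟨k, hk, G, F, fun s hs => ?_, t, ht, ?_⟩
  · rw [hmod s hs]
    exact ⟨hp _ _ (hwalk s).neg, (hwalk s).pref⟩
  · rw [hmod t ht]
    exact ⟨(hwalk t).pref, hstrict⟩

end TradingWalk

section CycleFlow

variable {I O : Type*} [DecidableEq I] [DecidableEq O] (G : ℕ → I) (F : ℕ → O) (k : ℕ)

/-- The first `k` trades of the walk `(G, F)`, undone. -/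
def cycleFlow (i : I) (o : O) : ℝ :=
  (∑ t ∈ range k, if G t = i ∧ F t = o then 1 else 0) -
    ∑ t ∈ range k, if G t = i ∧ F (t + 1) = o then 1 else 0

theorem cycleFlow_col_sum [Fintype I] (hF : F k = F 0) (o : O) :
    ∑ i, cycleFlow G F k i o = 0 := by
  simp only [cycleFlow, Finset.sum_sub_distrib]
  rw [Finset.sum_comm, Finset.sum_comm (γ := I)]
  simp only [ite_and, Finset.sum_ite_eq, Finset.mem_univ, if_true, ← Finset.sum_sub_distrib]
  rw [Finset.sum_range_sub' (fun t => if F t = o then (1 : ℝ) else 0), hF, sub_self]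

theorem cycleFlow_upperSum [Fintype O] {R : I → O → O → Prop} [∀ i, DecidableRel (R i)]
    (htrans : ∀ i a b c, R i a b → R i b c → R i a c)
    (hind : ∀ t < k, R (G t) (F t) (F (t + 1)) ∧ R (G t) (F (t + 1)) (F t)) (i : I) (o : O) :
    upperSum (R i) (cycleFlow G F k i) o = 0 := by
  simp only [upperSum, cycleFlow, Finset.sum_sub_distrib]
  rw [Finset.sum_comm, Finset.sum_comm (γ := O), ← Finset.sum_sub_distrib]
  refine Finset.sum_eq_zero fun t ht => ?_
  obtain ⟨hfwd, hbwd⟩ := hind t (Finset.mem_range.1 ht)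
  by_cases hG : G t = i
  · subst hG
    have hiff : R (G t) (F t) o ↔ R (G t) (F (t + 1)) o :=
      ⟨htrans _ _ _ _ hbwd, htrans _ _ _ _ hfwd⟩
    simp [Finset.sum_ite_eq, hiff]
  · simp [hG]

variable {G F k} {R : I → O → O → Prop} {δ : I → O → ℝ}

theorem IsTradingWalk.neg_of_cycleFlow_pos (hwalk : IsTradingWalk R δ G F) {i : I} {o : O}
    (h : 0 < cycleFlow G F k i o) : δ i o < 0 := by
  have hB : 0 ≤ ∑ t ∈ range k, if G t = i ∧ F (t + 1) = o then (1 : ℝ) else 0 :=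
    Finset.sum_nonneg fun _ _ => by positivity
  obtain ⟨t, -, ht⟩ := Finset.exists_ne_zero_of_sum_ne_zero
    (s := range k) (f := fun t => if G t = i ∧ F t = o then (1 : ℝ) else 0)
    (by unfold cycleFlow at h; linarith)
  obtain ⟨rfl, rfl⟩ := (ite_ne_right_iff.1 ht).1
  exact (hwalk t).neg

theorem IsTradingWalk.pos_of_cycleFlow_neg (hwalk : IsTradingWalk R δ G F) {i : I} {o : O}
    (h : cycleFlow G F k i o < 0) : 0 < δ i o := by
  have hA : 0 ≤ ∑ t ∈ range k, if G t = i ∧ F t = o then (1 : ℝ) else 0 :=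
    Finset.sum_nonneg fun _ _ => by positivity
  obtain ⟨t, -, ht⟩ := Finset.exists_ne_zero_of_sum_ne_zero
    (s := range k) (f := fun t => if G t = i ∧ F (t + 1) = o then (1 : ℝ) else 0)
    (by unfold cycleFlow at h; linarith)
  obtain ⟨rfl, rfl⟩ := (ite_ne_right_iff.1 ht).1
  exact (hwalk t).pos

theorem IsTradingWalk.cycleFlow_pos (hwalk : IsTradingWalk R δ G F) (hk : 0 < k) :
    0 < cycleFlow G F k (G 0) (F 0) := by
  have hA : 1 ≤ ∑ t ∈ range k, if G t = G 0 ∧ F t = F 0 then (1 : ℝ) else 0 := by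
    simpa using Finset.single_le_sum (f := fun t => if G t = G 0 ∧ F t = F 0 then (1 : ℝ) else 0)
      (fun _ _ => by positivity) (Finset.mem_range.2 hk)
  have hB : (∑ t ∈ range k, if G t = G 0 ∧ F (t + 1) = F 0 then (1 : ℝ) else 0) = 0 := by
    refine Finset.sum_eq_zero fun t _ => if_neg fun ⟨hG, hF⟩ => ?_
    have := (hwalk t).pos
    rw [hG, hF] at this
    exact this.not_gt (hwalk 0).neg
  unfold cycleFlow
  linarith

end CycleFlow

section BalancedImprovement

variable {I O : Type*} [Fintype I] [Fintype O] {R : I → O → O → Prop} [∀ i, DecidableRel (R i)]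

variable (R) in
/-- Abstracts `δ = p' - p`: nonnegative upper sums are the weak stochastic dominance of
`p' i` over `p i`. -/
structure IsBalancedImprovement (p δ : I → O → ℝ) : Prop where
  col_sum : ∀ o, ∑ i, δ i o = 0
  upperSum_nonneg : ∀ i o, 0 ≤ upperSum (R i) (δ i) o
  pos_of_neg : ∀ i o, δ i o < 0 → 0 < p i o

variable {p δ : I → O → ℝ}

theorem exists_trade_of_pos (hrefl : ∀ i o, R i o o) (hcol : ∀ o, ∑ i, δ i o = 0)
    (hup : ∀ i o, 0 ≤ upperSum (R i) (δ i) o) {i : I} {a : O} (ha : 0 < δ i a) :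
    ∃ i' b, IsTrade R δ i' a b := by
  obtain ⟨i', -, hi'⟩ : ∃ i' ∈ univ, 0 < -δ i' a :=
    exists_pos_of_sum_zero_of_exists_nonzero _ (by simp [Finset.sum_neg_distrib, hcol])
      ⟨i, mem_univ _, by linarith⟩
  refine ⟨i', ?_⟩
  by_contra! hb
  have hneg : upperSum (R i') (δ i') a < 0 := by
    refine (Finset.sum_lt_sum (g := 0) (fun b hb' => ?_) ⟨a, ?_, ?_⟩).trans_eq (by simp)
    · by_contra! hpos
      exact hb b ⟨by linarith, hpos, (Finset.mem_filter.1 hb').2⟩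
    · simp [hrefl]
    · simp only [Pi.zero_apply]; linarith
  exact (hup i' a).not_gt hneg

theorem exists_tradingWalk (hrefl : ∀ i o, R i o o) (hcol : ∀ o, ∑ i, δ i o = 0)
    (hup : ∀ i o, 0 ≤ upperSum (R i) (δ i) o) {i : I} {a : O} (ha : 0 < δ i a) :
    ∃ G F, IsTradingWalk R δ G F := by
  obtain ⟨F, hF⟩ := exists_seq_of_forall_exists_rel (P := fun a => ∃ i, 0 < δ i a)
    (r := fun a b => ∃ i, IsTrade R δ i a b)
    (fun _ ⟨_, ha⟩ =>
      let ⟨i', b, htrade⟩ := exists_trade_of_pos hrefl hcol hup ha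
      ⟨b, ⟨i', htrade.pos⟩, i', htrade⟩) ⟨i, ha⟩
  choose G hG using hF
  exact ⟨G, F, hG⟩

theorem IsBalancedImprovement.add_mul {c : I → O → ℝ} {ε : ℝ}
    (hδ : IsBalancedImprovement R p δ) (hcol : ∀ o, ∑ i, c i o = 0)
    (hup : ∀ i o, upperSum (R i) (c i) o = 0) (hneg : ∀ i o, δ i o + ε * c i o < 0 → δ i o < 0) :
    IsBalancedImprovement R p fun i o => δ i o + ε * c i o where
  col_sum o := by simp [Finset.sum_add_distrib, ← Finset.mul_sum, hδ.col_sum, hcol]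
  upperSum_nonneg i o := by
    rw [upperSum_add_mul, hup, mul_zero, add_zero]
    exact hδ.upperSum_nonneg i o
  pos_of_neg i o h := hδ.pos_of_neg i o (hneg i o h)

theorem IsBalancedImprovement.hasImprovingCycle (hrefl : ∀ i o, R i o o)
    (htrans : ∀ i a b c, R i a b → R i b c → R i a c) (hδ : IsBalancedImprovement R p δ)
    (hgain : ∃ j o, 0 < upperSum (R j) (δ j) o) : HasImprovingCycle R p := by
  classical
  induction hn : (Function.support (Function.uncurry δ)).ncard using Nat.strong_induction_on
    generalizing δ with
  | _ n ih =>
  obtain ⟨j, o, hjo⟩ := hgain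
  obtain ⟨a, -, ha⟩ : ∃ a ∈ univ.filter (fun a => R j a o), (0 : O → ℝ) a < δ j a :=
    Finset.exists_lt_of_sum_lt (by simpa [upperSum] using hjo)
  obtain ⟨G₀, F₀, hwalk₀⟩ := exists_tradingWalk hrefl hδ.col_sum hδ.upperSum_nonneg ha
  obtain ⟨G, F, k, hk, hFk, hwalk⟩ := hwalk₀.exists_closed
  by_cases hind : ∀ t < k, R (G t) (F t) (F (t + 1))
  · obtain ⟨ε, hsign, hsupp⟩ := exists_support_add_mul_ssubset
      (δ := Function.uncurry δ) (c := Function.uncurry (cycleFlow G F k))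
      (fun _ => hwalk.neg_of_cycleFlow_pos) (fun _ => hwalk.pos_of_cycleFlow_neg)
      (fun h => (hwalk.cycleFlow_pos hk).ne' (congrFun h (G 0, F 0)))
    have hup : ∀ i o, upperSum (R i) (cycleFlow G F k i) o = 0 :=
      cycleFlow_upperSum G F k htrans fun t ht => ⟨hind t ht, (hwalk t).pref⟩
    refine ih _ (hn ▸ Set.ncard_lt_ncard hsupp)
      (hδ.add_mul (cycleFlow_col_sum G F k hFk) hup fun i o => hsign (i, o)) ⟨j, o, ?_⟩ rfl
    rwa [upperSum_add_mul, hup, mul_zero, add_zero]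
  · push Not at hind
    obtain ⟨t, ht, hstrict⟩ := hind
    exact hwalk.hasImprovingCycle hδ.pos_of_neg hFk ht hstrict

end BalancedImprovement

theorem improvement_yields_trading_cycle_general
    {I O : Type*} [Fintype I] [Fintype O]
    (R : I → O → O → Prop) [∀ i, DecidableRel (R i)]
    (htotal : ∀ i, Total (R i)) (htrans : ∀ i, Transitive (R i))
    (p p' : I → O → ℝ)
    (hp'nonneg : ∀ i o, 0 ≤ p' i o)
    (hcol : ∀ o, ∑ i, p' i o = ∑ i, p i o)
    (hweak : ∀ i, SDom (R i) (p' i) (p i))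
    (hstrict : ∃ j, SSDom (R j) (p' j) (p j)) :
    ∃ (k : ℕ), 2 ≤ k ∧ ∃ (ag : ℕ → I) (ob : ℕ → O),
      (∀ t < k, 0 < p (ag t) (ob t) ∧ R (ag t) (ob ((t + 1) % k)) (ob t)) ∧
      (∃ t < k, R (ag t) (ob ((t + 1) % k)) (ob t) ∧
        ¬ R (ag t) (ob t) (ob ((t + 1) % k))) := by
  have hδ : IsBalancedImprovement R p (p' - p) := by
    refine ⟨fun o => ?_, fun i o => ?_, fun i o h => ?_⟩
    · simp [Finset.sum_sub_distrib, hcol]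
    · rw [Pi.sub_apply, upperSum_sub, sub_nonneg]
      exact hweak i o
    · rw [Pi.sub_apply, Pi.sub_apply, sub_neg] at h
      exact (hp'nonneg i o).trans_lt h
  obtain ⟨j, -, o, hjo⟩ := hstrict
  exact hδ.hasImprovingCycle (fun i o => (htotal i o o).elim id id)
    (fun i _ _ _ hab hbc => htrans i hab hbc) ⟨j, o, by rwa [Pi.sub_apply, upperSum_sub, sub_pos]⟩

/-- Any strict stochastic-dominance improvement `p'` over `p` that preserves
each agent's total and each object's total usage gives rise to an improving
trading cycle among positive consumptions of `p`: there are agents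
`i_1, …, i_k` and objects `o_1, …, o_k` (`k ≥ 2`, indices mod `k`) such that
each `i_t` consumes a positive amount of `o_t` in `p`, weakly prefers
`o_{t+1}` to `o_t`, and some `i_t` strictly prefers `o_{t+1}` to `o_t`. -/
theorem improvement_yields_trading_cycle
    {I O : Type*} [Fintype I] [Nonempty I] [Fintype O] [Nonempty O]
    (R : I → O → O → Prop) [∀ i, DecidableRel (R i)]
    (htotal : ∀ i, Total (R i)) (htrans : ∀ i, Transitive (R i))
    (p p' : I → O → ℝ)
    (hpnonneg : ∀ i o, 0 ≤ p i o) (hp'nonneg : ∀ i o, 0 ≤ p' i o)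
    (hrow : ∀ i, ∑ o, p' i o = ∑ o, p i o)
    (hcol : ∀ o, ∑ i, p' i o = ∑ i, p i o)
    (hweak : ∀ i, SDom (R i) (p' i) (p i))
    (hstrict : ∃ j, SSDom (R j) (p' j) (p j)) :
    ∃ (k : ℕ), 2 ≤ k ∧ ∃ (ag : ℕ → I) (ob : ℕ → O),
      (∀ t < k, 0 < p (ag t) (ob t) ∧ R (ag t) (ob ((t + 1) % k)) (ob t)) ∧
      (∃ t < k, R (ag t) (ob ((t + 1) % k)) (ob t) ∧
        ¬ R (ag t) (ob t) (ob ((t + 1) % k))) :=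
  improvement_yields_trading_cycle_general R htotal htrans p p' hp'nonneg hcol hweak hstrict
end

section
/- Let I and O be finite sets with I nonempty and C : I → Finset O. Suppose the nonempty subsets Y₁, Y₂ ⊆ I both minimize the ratio |Γ(Y)| / |Y| over all nonempty subsets Y ⊆ I. Then Y₁ ∪ Y₂ also minimizes this ratio. -/
/-!
Let `r` be the minimal ratio, attained at `Y₁` and `Y₂`. Then `|Γ(Y)| ≥ r |Y|` for every `Y`
(trivially for `Y = ∅`), with equality at `Y₁` and `Y₂`. Since `Y ↦ |Γ(Y)|` is submodular and
`Y ↦ r |Y|` is modular,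
`|Γ(Y₁ ∪ Y₂)| ≤ |Γ(Y₁)| + |Γ(Y₂)| - |Γ(Y₁ ∩ Y₂)| ≤ r (|Y₁| + |Y₂| - |Y₁ ∩ Y₂|) = r |Y₁ ∪ Y₂|`,
so the ratio of `Y₁ ∪ Y₂` is at most `r`.
-/

open Finset

namespace Finset

variable {α β : Type*}

theorem card_biUnion_union_add_card_biUnion_inter_le [DecidableEq α] [DecidableEq β]
    (C : α → Finset β) (A B : Finset α) :
    #((A ∪ B).biUnion C) + #((A ∩ B).biUnion C) ≤ #(A.biUnion C) + #(B.biUnion C) := by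
  have hinter : (A ∩ B).biUnion C ⊆ A.biUnion C ∩ B.biUnion C :=
    subset_inter (biUnion_subset_biUnion_of_subset_left C inter_subset_left)
      (biUnion_subset_biUnion_of_subset_left C inter_subset_right)
  calc #((A ∪ B).biUnion C) + #((A ∩ B).biUnion C)
      ≤ #(A.biUnion C ∪ B.biUnion C) + #(A.biUnion C ∩ B.biUnion C) := by
        rw [union_biUnion]; exact Nat.add_le_add_left (card_le_card hinter) _
    _ = #(A.biUnion C) + #(B.biUnion C) := card_union_add_card_inter _ _

theorem mul_card_le_of_forall_le_div {f : Finset α → ℝ} {r : ℝ} (hf : 0 ≤ f ∅)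
    (hr : ∀ Y : Finset α, Y.Nonempty → r ≤ f Y / #Y) (Y : Finset α) : r * #Y ≤ f Y := by
  rcases Y.eq_empty_or_nonempty with rfl | hY
  · simpa using hf
  · exact (le_div_iff₀ (by exact_mod_cast hY.card_pos)).1 (hr Y hY)

theorem le_mul_card_union_of_submodular [DecidableEq α] {f : Finset α → ℝ} {r : ℝ}
    {A B : Finset α}
    (hsub : f (A ∪ B) + f (A ∩ B) ≤ f A + f B) (hA : f A ≤ r * #A) (hB : f B ≤ r * #B)
    (hAB : r * #(A ∩ B) ≤ f (A ∩ B)) : f (A ∪ B) ≤ r * #(A ∪ B) := by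
  have hcard : (#(A ∪ B) : ℝ) + #(A ∩ B) = #A + #B := by
    exact_mod_cast card_union_add_card_inter A B
  linear_combination hsub + hA + hB + hAB - r * hcard

end Finset

theorem union_of_ratio_minimizers_is_minimizer_general
    {I O : Type*}
    [DecidableEq I] [DecidableEq O]
    (C : I → Finset O) (Y₁ Y₂ : Finset I)
    (h1 : Y₁.Nonempty) (h2 : Y₂.Nonempty)
    (hmin1 : ∀ Y : Finset I, Y.Nonempty →
      ((Y₁.biUnion C).card : ℝ) / (Y₁.card : ℝ) ≤
        ((Y.biUnion C).card : ℝ) / (Y.card : ℝ))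
    (hmin2 : ∀ Y : Finset I, Y.Nonempty →
      ((Y₂.biUnion C).card : ℝ) / (Y₂.card : ℝ) ≤
        ((Y.biUnion C).card : ℝ) / (Y.card : ℝ)) :
    ∀ Y : Finset I, Y.Nonempty →
      (((Y₁ ∪ Y₂).biUnion C).card : ℝ) / ((Y₁ ∪ Y₂).card : ℝ) ≤
        ((Y.biUnion C).card : ℝ) / (Y.card : ℝ) := by
  intro Y hY
  set r : ℝ := ((Y₁.biUnion C).card : ℝ) / (Y₁.card : ℝ)
  have hpos : ∀ Z : Finset I, Z.Nonempty → (0 : ℝ) < Z.card := fun Z hZ => by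
    exact_mod_cast hZ.card_pos
  have hr₂ : ((Y₂.biUnion C).card : ℝ) / (Y₂.card : ℝ) = r :=
    le_antisymm (hmin2 Y₁ h1) (hmin1 Y₂ h2)
  have hunion : (((Y₁ ∪ Y₂).biUnion C).card : ℝ) ≤ r * (Y₁ ∪ Y₂).card :=
    le_mul_card_union_of_submodular (f := fun Z => ((Z.biUnion C).card : ℝ))
      (by exact_mod_cast card_biUnion_union_add_card_biUnion_inter_le C Y₁ Y₂)
      ((div_le_iff₀ (hpos Y₁ h1)).1 le_rfl) ((div_le_iff₀ (hpos Y₂ h2)).1 hr₂.le)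
      (mul_card_le_of_forall_le_div (by simp) hmin1 _)
  calc (((Y₁ ∪ Y₂).biUnion C).card : ℝ) / ((Y₁ ∪ Y₂).card : ℝ)
      ≤ r := (div_le_iff₀ (hpos _ (h1.mono subset_union_left))).2 hunion
    _ ≤ _ := hmin1 Y hY

/-- If the nonempty sets of agents `Y₁` and `Y₂` both minimize the ratio
`|Γ(Y)| / |Y|` over all nonempty sets of agents `Y` (where
`Γ(Y) = ⋃_{i ∈ Y} C i`), then their union `Y₁ ∪ Y₂` is also a minimizer. -/
theorem union_of_ratio_minimizers_is_minimizer
    {I O : Type*} [Fintype I] [Nonempty I] [Fintype O]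
    [DecidableEq I] [DecidableEq O]
    (C : I → Finset O) (Y₁ Y₂ : Finset I)
    (h1 : Y₁.Nonempty) (h2 : Y₂.Nonempty)
    (hmin1 : ∀ Y : Finset I, Y.Nonempty →
      ((Y₁.biUnion C).card : ℝ) / (Y₁.card : ℝ) ≤
        ((Y.biUnion C).card : ℝ) / (Y.card : ℝ))
    (hmin2 : ∀ Y : Finset I, Y.Nonempty →
      ((Y₂.biUnion C).card : ℝ) / (Y₂.card : ℝ) ≤
        ((Y.biUnion C).card : ℝ) / (Y.card : ℝ)) :
    ∀ Y : Finset I, Y.Nonempty →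
      (((Y₁ ∪ Y₂).biUnion C).card : ℝ) / ((Y₁ ∪ Y₂).card : ℝ) ≤
        ((Y.biUnion C).card : ℝ) / (Y.card : ℝ) :=
  union_of_ratio_minimizers_is_minimizer_general C Y₁ Y₂ h1 h2 hmin1 hmin2
end

section
/- Let I and O be finite sets with I nonempty and C : I → Finset O. Among the nonempty subsets Y ⊆ I minimizing the ratio |Γ(Y)| / |Y|, there is a unique one of largest cardinality, X*, and X* contains every minimizer: every nonempty Y ⊆ I with |Γ(Y)|/|Y| equal to the minimum satisfies Y ⊆ X*. -/
open Finset

private noncomputable def rat {I O : Type*} [DecidableEq O]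
    (C : I → Finset O) (Y : Finset I) : ℝ :=
  ((Y.biUnion C).card : ℝ) / (Y.card : ℝ)

private lemma union_minimizer {I O : Type*} [DecidableEq I] [DecidableEq O]
    (C : I → Finset O) {Y Z : Finset I} (hY : Y.Nonempty) (hZ : Z.Nonempty)
    (hYmin : ∀ W : Finset I, W.Nonempty → rat C Y ≤ rat C W)
    (hZmin : ∀ W : Finset I, W.Nonempty → rat C Z ≤ rat C W) :
    ∀ W : Finset I, W.Nonempty → rat C (Y ∪ Z) ≤ rat C W := by
  set m := rat C Y with hm
  have hYpos : (0:ℝ) < Y.card := by exact_mod_cast hY.card_pos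
  have hZpos : (0:ℝ) < Z.card := by exact_mod_cast hZ.card_pos
  have hUZ : rat C Z = m := le_antisymm (hZmin Y hY) (hYmin Z hZ)
  have hmY : ((Y.biUnion C).card : ℝ) = m * Y.card := by
    rw [hm, rat]; field_simp
  have hmZ : ((Z.biUnion C).card : ℝ) = m * Z.card := by
    rw [← hUZ, rat]; field_simp
  have hmnonneg : 0 ≤ m := by
    rw [hm, rat]; positivity
  have hlow : ∀ W : Finset I, m * W.card ≤ ((W.biUnion C).card : ℝ) := by
    intro W
    rcases W.eq_empty_or_nonempty with h | h
    · simp [h]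
    · have hWpos : (0:ℝ) < W.card := by exact_mod_cast h.card_pos
      have := hYmin W h
      rw [rat, le_div_iff₀ hWpos] at this
      exact this
  -- submodularity
  have hunion : (Y ∪ Z).biUnion C = Y.biUnion C ∪ Z.biUnion C := by
    ext x; simp [or_and_right, exists_or]
  have hinter : (Y ∩ Z).biUnion C ⊆ Y.biUnion C ∩ Z.biUnion C := by
    intro x hx
    simp only [mem_biUnion, mem_inter] at hx ⊢
    obtain ⟨i, ⟨hi1, hi2⟩, hx⟩ := hx
    exact ⟨⟨i, hi1, hx⟩, ⟨i, hi2, hx⟩⟩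
  have hsub : ((Y ∪ Z).biUnion C).card + ((Y ∩ Z).biUnion C).card
      ≤ (Y.biUnion C).card + (Z.biUnion C).card := by
    calc ((Y ∪ Z).biUnion C).card + ((Y ∩ Z).biUnion C).card
        ≤ (Y.biUnion C ∪ Z.biUnion C).card + (Y.biUnion C ∩ Z.biUnion C).card := by
          rw [hunion]; exact Nat.add_le_add_left (card_le_card hinter) _
      _ = (Y.biUnion C).card + (Z.biUnion C).card := card_union_add_card_inter _ _
  have hcards : Y.card + Z.card = (Y ∪ Z).card + (Y ∩ Z).card :=
    (card_union_add_card_inter Y Z).symm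
  have hU : Y ∪ Z |>.Nonempty := hY.mono subset_union_left
  have hUpos : (0:ℝ) < (Y ∪ Z).card := by exact_mod_cast hU.card_pos
  have hkey : rat C (Y ∪ Z) ≤ m := by
    rw [rat, div_le_iff₀ hUpos]
    have h1 : m * ((Y ∩ Z).card : ℝ) ≤ ((Y ∩ Z).biUnion C).card := hlow _
    have h2 : (((Y ∪ Z).biUnion C).card : ℝ) + ((Y ∩ Z).biUnion C).card
        ≤ (Y.biUnion C).card + (Z.biUnion C).card := by exact_mod_cast hsub
    have h3 : (Y.card : ℝ) + Z.card = ((Y ∪ Z).card : ℝ) + (Y ∩ Z).card := by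
      exact_mod_cast hcards
    nlinarith [h1, h2, h3, hmY, hmZ]
  intro W hW
  exact hkey.trans (hYmin W hW)

/-- Among the nonempty sets of agents minimizing the ratio `|Γ(Y)| / |Y|`
(where `Γ(Y) = ⋃_{i ∈ Y} C i`), there is a unique one of largest cardinality
`X*`, and `X*` contains every minimizer. -/
theorem largest_ratio_minimizer_exists_unique
    {I O : Type*} [Fintype I] [Nonempty I] [Fintype O]
    [DecidableEq I] [DecidableEq O]
    (C : I → Finset O) :
    ∃ X : Finset I, X.Nonempty ∧
      (∀ Y : Finset I, Y.Nonempty →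
        ((X.biUnion C).card : ℝ) / (X.card : ℝ) ≤
          ((Y.biUnion C).card : ℝ) / (Y.card : ℝ)) ∧
      (∀ Y : Finset I, Y.Nonempty →
        (∀ Z : Finset I, Z.Nonempty →
          ((Y.biUnion C).card : ℝ) / (Y.card : ℝ) ≤
            ((Z.biUnion C).card : ℝ) / (Z.card : ℝ)) →
        Y ⊆ X) ∧
      (∀ Y : Finset I, Y.Nonempty →
        (∀ Z : Finset I, Z.Nonempty →
          ((Y.biUnion C).card : ℝ) / (Y.card : ℝ) ≤
            ((Z.biUnion C).card : ℝ) / (Z.card : ℝ)) →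
        X.card ≤ Y.card → Y = X) := by
  classical
  -- existence of a minimizer
  have hex : ∃ Y : Finset I, Y.Nonempty ∧ ∀ Z : Finset I, Z.Nonempty → rat C Y ≤ rat C Z := by
    obtain ⟨Y, hYmem, hYmin⟩ := Finset.exists_min_image
      ((univ : Finset (Finset I)).filter (fun Y => Y.Nonempty)) (rat C)
      ⟨univ, by simp [Finset.univ_nonempty]⟩
    refine ⟨Y, (mem_filter.mp hYmem).2, fun Z hZ => hYmin Z (by simp [hZ])⟩
  -- minimizer of maximal cardinality
  obtain ⟨X, hXmem, hXmax⟩ := Finset.exists_max_image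
    ((univ : Finset (Finset I)).filter
      (fun Y => Y.Nonempty ∧ ∀ Z : Finset I, Z.Nonempty → rat C Y ≤ rat C Z))
    (fun Y => Y.card)
    (by obtain ⟨Y, h1, h2⟩ := hex; exact ⟨Y, mem_filter.mpr ⟨mem_univ _, h1, h2⟩⟩)
  simp only [mem_filter, mem_univ, true_and] at hXmem
  obtain ⟨hXne, hXmin⟩ := hXmem
  have hcontain : ∀ Y : Finset I, Y.Nonempty →
      (∀ Z : Finset I, Z.Nonempty → rat C Y ≤ rat C Z) → Y ⊆ X := by
    intro Y hYne hYmin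
    have hUmin := union_minimizer C hYne hXne hYmin hXmin
    have hUne : (Y ∪ X).Nonempty := hYne.mono subset_union_left
    have hle : (Y ∪ X).card ≤ X.card := hXmax _ (mem_filter.mpr ⟨mem_univ _, hUne, hUmin⟩)
    have heq : Y ∪ X = X :=
      (eq_of_subset_of_card_le subset_union_right hle).symm
    exact fun a ha => heq ▸ mem_union_left X ha
  refine ⟨X, hXne, fun Y hY => hXmin Y hY, hcontain, ?_⟩
  intro Y hYne hYmin hcard
  exact eq_of_subset_of_card_le (hcontain Y hYne hYmin) hcard
end

section
/- Let I and O be finite sets, X ⊆ I a nonempty subset, C : I → Finset O, and r ∈ ℝ_{≥0}. Suppose |Γ(Y)| ≥ r · |Y| for every subset Y ⊆ X. Then there exists p ∈ ℝ_{≥0}^{X×O} such that p_{i,o} > 0 only if o ∈ C_i, Σ_{o∈O} p_{i,o} = r for every i ∈ X, and Σ_{i∈X} p_{i,o} ≤ 1 for every o ∈ O. Moreover, if r · |X| = |Γ(X)|, then necessarily Σ_{i∈X} p_{i,o} = 1 for every o ∈ Γ(X), i.e., all objects acceptable to X are fully assigned. -/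
open Finset

/-- `p` is a feasible fractional assignment giving every agent in `X` exactly
`r` of acceptable objects, with unit supply of each object. -/
def EgalFeasible {I O : Type*} [Fintype O]
    (C : I → Finset O) (X : Finset I) (r : ℝ) (p : I → O → ℝ) : Prop :=
  (∀ i o, 0 ≤ p i o) ∧
  (∀ i ∈ X, ∀ o, 0 < p i o → o ∈ C i) ∧
  (∀ i ∈ X, ∑ o, p i o = r) ∧
  (∀ o, ∑ i ∈ X, p i o ≤ 1)

lemma exists_assignment_nat {I O : Type*} [Fintype O] [DecidableEq O]
    (C : I → Finset O) (X : Finset I) (a b : ℕ) (hb : 0 < b)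
    (hH : ∀ Y : Finset I, Y ⊆ X → a * Y.card ≤ b * (Y.biUnion C).card) :
    ∃ p : I → O → ℝ, (∀ i o, 0 ≤ p i o ∧ p i o ≤ 1) ∧
      (∀ i ∈ X, ∀ o, o ∉ C i → p i o = 0) ∧
      (∀ i ∈ X, ∑ o, p i o = (a : ℝ) / b) ∧
      (∀ o, ∑ i ∈ X, p i o ≤ 1) := by
  classical
  set t : ↥X × Fin a → Finset (O × Fin b) := fun x => (C x.1.1) ×ˢ Finset.univ with ht
  have hall : ∀ s : Finset (↥X × Fin a), s.card ≤ (s.biUnion t).card := by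
    intro s
    set Y : Finset I := (s.image Prod.fst).image (fun i : ↥X => (i : I)) with hY
    have hYX : Y ⊆ X := by
      intro i hi
      simp only [hY, mem_image] at hi
      obtain ⟨j, _, rfl⟩ := hi
      exact j.2
    have h1 : s.card ≤ a * Y.card := by
      have hsub : s ⊆ (s.image Prod.fst) ×ˢ (Finset.univ : Finset (Fin a)) := by
        intro x hx
        simp only [mem_product, mem_univ, and_true]
        exact mem_image_of_mem _ hx
      calc s.card ≤ ((s.image Prod.fst) ×ˢ (Finset.univ : Finset (Fin a))).card :=
            card_le_card hsub
        _ = (s.image Prod.fst).card * a := by simp [card_product]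
        _ = Y.card * a := by rw [hY, card_image_of_injective _ Subtype.coe_injective]
        _ = a * Y.card := Nat.mul_comm _ _
    have h2 : s.biUnion t = (Y.biUnion C) ×ˢ (Finset.univ : Finset (Fin b)) := by
      ext ⟨o, k⟩
      constructor
      · intro hm
        rw [mem_biUnion] at hm
        obtain ⟨x, hx, hm⟩ := hm
        have ho : o ∈ C x.1.1 := (Finset.mem_product.mp hm).1
        refine Finset.mem_product.mpr ⟨mem_biUnion.mpr ⟨(x.1 : I), ?_, ho⟩, mem_univ _⟩
        exact mem_image_of_mem _ (mem_image_of_mem _ hx)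
      · intro hm
        have ho := (Finset.mem_product.mp hm).1
        rw [mem_biUnion] at ho
        obtain ⟨i, hi, ho⟩ := ho
        rw [hY, mem_image] at hi
        obtain ⟨j, hj, rfl⟩ := hi
        rw [mem_image] at hj
        obtain ⟨x, hx, rfl⟩ := hj
        exact mem_biUnion.mpr ⟨x, hx, Finset.mem_product.mpr ⟨ho, mem_univ _⟩⟩
    calc s.card ≤ a * Y.card := h1
      _ ≤ b * (Y.biUnion C).card := hH Y hYX
      _ = (s.biUnion t).card := by rw [h2]; simp [card_product, Nat.mul_comm]
  obtain ⟨f, hfinj, hft⟩ := (Finset.all_card_le_biUnion_card_iff_exists_injective t).mp hall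
  have hft1 : ∀ x, (f x).1 ∈ C x.1.1 := fun x => (Finset.mem_product.mp (hft x)).1
  set c : ↥X → O → ℕ := fun i o => (Finset.univ.filter fun k : Fin a => (f (i, k)).1 = o).card
    with hc
  set p : I → O → ℝ := fun i o => if h : i ∈ X then (c ⟨i, h⟩ o : ℝ) / b else 0 with hp
  have hbR : (0 : ℝ) < b := by exact_mod_cast hb
  -- row sums
  have hrow : ∀ i : ↥X, ∑ o, c i o = a := by
    intro i
    have h := Finset.card_eq_sum_card_fiberwise
      (f := fun k : Fin a => (f (i, k)).1) (s := Finset.univ) (t := Finset.univ)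
      (fun x _ => mem_univ _)
    simpa [hc, Finset.card_univ] using h.symm
  -- entry bound
  have hcle : ∀ (i : ↥X) o, c i o ≤ b := by
    intro i o
    have h : ((Finset.univ.filter fun k : Fin a => (f (i, k)).1 = o)).card
        ≤ (Finset.univ : Finset (Fin b)).card := by
      apply Finset.card_le_card_of_injOn (fun k => (f (i, k)).2) (fun _ _ => mem_univ _)
      intro x hx y hy hxy
      simp only [Finset.coe_filter, Set.mem_setOf_eq, mem_univ, true_and] at hx hy
      have hfe : f (i, x) = f (i, y) := Prod.ext (hx.trans hy.symm) hxy
      exact (Prod.mk.injEq _ _ _ _).mp (hfinj hfe) |>.2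
    simpa [hc, Finset.card_univ] using h
  -- column sums
  have hcol : ∀ o, ∑ i : ↥X, c i o ≤ b := by
    intro o
    set S : Finset (↥X × Fin a) := Finset.univ.filter (fun x => (f x).1 = o) with hS
    have h1 : S.card = ∑ i : ↥X, c i o := by
      rw [Finset.card_eq_sum_card_fiberwise (f := Prod.fst) (s := S) (t := Finset.univ)
        (fun _ _ => mem_univ _)]
      refine Finset.sum_congr rfl fun i _ => ?_
      apply Finset.card_bij (fun x _ => x.2)
      · intro x hx
        simp only [hS, mem_filter, mem_univ, true_and] at hx
        simp only [hc, mem_filter, mem_univ, true_and]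
        rw [show (i, x.2) = x from (Prod.ext hx.2.symm rfl)]
        exact hx.1
      · intro x hx y hy hxy
        simp only [hS, mem_filter] at hx hy
        exact Prod.ext (hx.2.trans hy.2.symm) hxy
      · intro k hk
        simp only [hc, mem_filter, mem_univ, true_and] at hk
        exact ⟨(i, k), by simp [hS, hk], rfl⟩
    have h2 : S.card ≤ b := by
      have h : S.card ≤ (Finset.univ : Finset (Fin b)).card := by
        apply Finset.card_le_card_of_injOn (fun x => (f x).2) (fun _ _ => mem_univ _)
        intro x hx y hy hxy
        simp only [hS, Finset.coe_filter, Set.mem_setOf_eq, mem_univ, true_and] at hx hy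
        exact hfinj (Prod.ext (hx.trans hy.symm) hxy)
      simpa [Finset.card_univ] using h
    omega
  refine ⟨p, ?_, ?_, ?_, ?_⟩
  · intro i o
    constructor
    · rw [hp]; dsimp only; split
      · positivity
      · exact le_rfl
    · rw [hp]; dsimp only; split
      · rw [div_le_one hbR]
        exact_mod_cast hcle _ o
      · norm_num
  · intro i hi o ho
    rw [hp]; dsimp only; rw [dif_pos hi]
    have hz : c ⟨i, hi⟩ o = 0 := by
      rw [hc]
      simp only [Finset.card_eq_zero, Finset.filter_eq_empty_iff, mem_univ, true_implies]
      intro k hk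
      exact ho (hk ▸ hft1 (⟨i, hi⟩, k))
    rw [hz]
    simp
  · intro i hi
    have : ∀ o, p i o = (c ⟨i, hi⟩ o : ℝ) / b := fun o => by rw [hp]; dsimp only; rw [dif_pos hi]
    simp_rw [this]
    rw [← Finset.sum_div]
    congr 1
    rw [← Nat.cast_sum]
    exact congrArg _ (hrow ⟨i, hi⟩)
  · intro o
    have h1 : ∑ i ∈ X, p i o = (∑ i : ↥X, (c i o : ℝ)) / b := by
      rw [← Finset.sum_coe_sort X (fun i => p i o), Finset.sum_div]
      refine Finset.sum_congr rfl fun i _ => ?_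
      rw [hp]; dsimp only; rw [dif_pos i.2]
    rw [h1, div_le_one hbR]
    rw [← Nat.cast_sum]
    exact_mod_cast hcol o

/-- Fractional Hall theorem: if `|Γ(Y)| ≥ r·|Y|` for every `Y ⊆ X`, then
there is a feasible fractional assignment giving each agent in `X` exactly
`r` of acceptable objects. Moreover, if `r·|X| = |Γ(X)|`, then any such
assignment fully assigns every object acceptable to `X`. -/
theorem fractional_hall
    {I O : Type*} [Fintype I] [Fintype O] [DecidableEq O]
    (C : I → Finset O) (X : Finset I) (hX : X.Nonempty)
    (r : ℝ) (hr : 0 ≤ r)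
    (hHall : ∀ Y : Finset I, Y ⊆ X →
      r * (Y.card : ℝ) ≤ ((Y.biUnion C).card : ℝ)) :
    (∃ p : I → O → ℝ, EgalFeasible C X r p) ∧
    (r * (X.card : ℝ) = ((X.biUnion C).card : ℝ) →
      ∀ p : I → O → ℝ, EgalFeasible C X r p →
        ∀ o ∈ X.biUnion C, ∑ i ∈ X, p i o = 1) := by
  classical
  obtain ⟨i₀, hi₀⟩ := hX
  constructor
  · -- existence
    have hev : ∀ (i : I) (o : O), Continuous fun p : I → O → ℝ => p i o :=
      fun i o => (continuous_apply o).comp (continuous_apply i)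
    have hsum : ∀ i : I, Continuous fun p : I → O → ℝ => ∑ o, p i o :=
      fun i => continuous_finset_sum _ fun o _ => hev i o
    have hcolsum : ∀ o : O, Continuous fun p : I → O → ℝ => ∑ i ∈ X, p i o :=
      fun o => continuous_finset_sum _ fun i _ => hev i o
    set K : Set (I → O → ℝ) :=
      {p | ∀ i o, p i o ∈ Set.Icc (0:ℝ) 1} ∩
      {p | ∀ i ∈ X, ∀ o, o ∉ C i → p i o = 0} ∩
      {p | ∀ i ∈ X, ∑ o, p i o = ∑ o, p i₀ o} ∩
      {p | ∀ o, ∑ i ∈ X, p i o ≤ 1} with hK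
    have hKclosed : IsClosed K := by
      refine IsClosed.inter (IsClosed.inter (IsClosed.inter ?_ ?_) ?_) ?_
      · rw [Set.setOf_forall]
        refine isClosed_iInter fun i => ?_
        rw [Set.setOf_forall]
        exact isClosed_iInter fun o => isClosed_Icc.preimage (hev i o)
      · rw [Set.setOf_forall]
        refine isClosed_iInter fun i => ?_
        rw [Set.setOf_forall]
        refine isClosed_iInter fun hi => ?_
        rw [Set.setOf_forall]
        refine isClosed_iInter fun o => ?_
        rw [Set.setOf_forall]
        refine isClosed_iInter fun ho => ?_
        exact isClosed_singleton.preimage (hev i o)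
      · rw [Set.setOf_forall]
        refine isClosed_iInter fun i => ?_
        rw [Set.setOf_forall]
        refine isClosed_iInter fun hi => ?_
        exact isClosed_eq (hsum i) (hsum i₀)
      · rw [Set.setOf_forall]
        exact isClosed_iInter fun o => isClosed_le (hcolsum o) continuous_const
    have hKcomp : IsCompact K := by
      have hB : IsCompact (Set.univ.pi fun _ : I => Set.univ.pi fun _ : O => Set.Icc (0:ℝ) 1) :=
        isCompact_univ_pi fun _ => isCompact_univ_pi fun _ => isCompact_Icc
      refine hB.of_isClosed_subset hKclosed ?_
      intro p hp
      exact Set.mem_univ_pi.mpr fun i => Set.mem_univ_pi.mpr fun o => hp.1.1.1 i o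
    set g : (I → O → ℝ) → ℝ := fun p => ∑ o, p i₀ o with hg
    have hgK : IsClosed (g '' K) := (hKcomp.image (hsum i₀)).isClosed
    have hmem : ∀ n : ℕ, (⌊r * ((n + 1 : ℕ) : ℝ)⌋₊ : ℝ) / ((n + 1 : ℕ) : ℝ) ∈ g '' K := by
      intro n
      set a : ℕ := ⌊r * ((n + 1 : ℕ) : ℝ)⌋₊ with ha
      have hb : 0 < n + 1 := Nat.succ_pos n
      have hH : ∀ Y : Finset I, Y ⊆ X → a * Y.card ≤ (n + 1) * (Y.biUnion C).card := by
        intro Y hY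
        have h1 : (a : ℝ) ≤ r * ((n + 1 : ℕ) : ℝ) :=
          Nat.floor_le (by positivity)
        have h2 : (a : ℝ) * Y.card ≤ ((n + 1 : ℕ) : ℝ) * (Y.biUnion C).card := by
          calc (a : ℝ) * Y.card ≤ r * ((n + 1 : ℕ) : ℝ) * Y.card := by
                apply mul_le_mul_of_nonneg_right h1 (by positivity)
            _ = ((n + 1 : ℕ) : ℝ) * (r * Y.card) := by ring
            _ ≤ ((n + 1 : ℕ) : ℝ) * (Y.biUnion C).card := by
                apply mul_le_mul_of_nonneg_left (hHall Y hY) (by positivity)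
        exact_mod_cast h2
      obtain ⟨p, h01, hsupp, hrowp, hcolp⟩ := exists_assignment_nat C X a (n + 1) hb hH
      refine ⟨p, ⟨⟨⟨fun i o => ⟨(h01 i o).1, (h01 i o).2⟩, hsupp⟩, ?_⟩, hcolp⟩, ?_⟩
      · intro i hi
        rw [hrowp i hi, hrowp i₀ hi₀]
      · rw [hg]
        simp only
        rw [hrowp i₀ hi₀]
    have htend : Filter.Tendsto
        (fun n : ℕ => (⌊r * ((n + 1 : ℕ) : ℝ)⌋₊ : ℝ) / ((n + 1 : ℕ) : ℝ))
        Filter.atTop (nhds r) := by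
      have h1 : Filter.Tendsto (fun n : ℕ => ((n + 1 : ℕ) : ℝ)) Filter.atTop Filter.atTop :=
        tendsto_natCast_atTop_atTop.comp (Filter.tendsto_add_atTop_nat 1)
      exact (tendsto_nat_floor_mul_div_atTop hr).comp h1
    have hrK : r ∈ g '' K :=
      hgK.mem_of_tendsto htend (Filter.Eventually.of_forall hmem)
    obtain ⟨p, hpK, hgp⟩ := hrK
    refine ⟨p, fun i o => (hpK.1.1.1 i o).1, ?_, ?_, hpK.2⟩
    · intro i hi o hpos
      by_contra ho
      exact absurd (hpK.1.1.2 i hi o ho) (by linarith)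
    · intro i hi
      rw [hpK.1.2 i hi]
      exact hgp
  · -- moreover
    intro heq p hp
    obtain ⟨hnn, hacc, hrow, hcol⟩ := hp
    have hsupp : ∀ i ∈ X, ∀ o, o ∉ C i → p i o = 0 := by
      intro i hi o ho
      rcases lt_or_eq_of_le (hnn i o) with h | h
      · exact absurd (hacc i hi o h) ho
      · exact h.symm
    have hrow' : ∀ i ∈ X, ∑ o ∈ X.biUnion C, p i o = r := by
      intro i hi
      rw [← hrow i hi]
      apply Finset.sum_subset (subset_univ _)
      intro o _ ho
      exact hsupp i hi o fun hC => ho (mem_biUnion.mpr ⟨i, hi, hC⟩)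
    have htot : ∑ o ∈ X.biUnion C, ∑ i ∈ X, p i o = ((X.biUnion C).card : ℝ) := by
      rw [Finset.sum_comm]
      calc ∑ i ∈ X, ∑ o ∈ X.biUnion C, p i o = ∑ i ∈ X, r :=
            Finset.sum_congr rfl fun i hi => hrow' i hi
        _ = (X.card : ℝ) * r := by rw [Finset.sum_const, nsmul_eq_mul]
        _ = r * (X.card : ℝ) := mul_comm _ _
        _ = ((X.biUnion C).card : ℝ) := heq
    have hone : ∑ o ∈ X.biUnion C, ∑ i ∈ X, p i o = ∑ o ∈ X.biUnion C, (1 : ℝ) := by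
      rw [htot, Finset.sum_const, nsmul_eq_mul, mul_one]
    exact (Finset.sum_eq_sum_iff_of_le fun o _ => hcol o).mp hone
end

section
/- Let I and O be finite sets and C : I → Finset O. Call M ⊆ I × O a matching if every agent appears in at most one pair of M, every object appears in at most one pair of M, and (i,o) ∈ M implies o ∈ C_i. Say a matching M' Pareto dominates M if every agent matched in M is also matched in M' and some agent matched in M' is unmatched in M. Then a matching M admits no Pareto-dominating matching if and only if |M| is maximum among all matchings. In particular, all Pareto efficient matchings have the same cardinality. -/
open Finset

/-- `M` is a matching between agents and objects: each agent and each object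
appear in at most one pair, and matched pairs are acceptable. -/
def IsMatching {I O : Type*} (C : I → Finset O) (M : Finset (I × O)) : Prop :=
  (∀ m ∈ M, m.2 ∈ C m.1) ∧
  (∀ m ∈ M, ∀ m' ∈ M, m.1 = m'.1 → m = m') ∧
  (∀ m ∈ M, ∀ m' ∈ M, m.2 = m'.2 → m = m')

/-- Agent `i` is matched in `M`. -/
def MatchedIn {I O : Type*} (M : Finset (I × O)) (i : I) : Prop :=
  ∃ o, (i, o) ∈ M

/-- `M'` Pareto dominates `M` (dichotomous preferences): every agent matched
in `M` is matched in `M'`, and some agent matched in `M'` is unmatched in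
`M`. -/
def ParetoDominates {I O : Type*} (M' M : Finset (I × O)) : Prop :=
  (∀ i, MatchedIn M i → MatchedIn M' i) ∧
  (∃ i, MatchedIn M' i ∧ ¬ MatchedIn M i)

/-!
Matched agent sets are the independent sets of a transversal matroid: by Hall's theorem they
are the sets `A` with `#T ≤ #N(T)` for all `T ⊆ A`, where `N(T)` is the set of objects acceptable
to some agent of `T`. Pareto domination means strictly enlarging the matched agent set, so it
suffices to have the augmentation axiom: if `#A < #B` are matchable, `A ∪ {b}` is matchable for
some `b ∈ B \ A`. If not, every `b ∈ B \ A` has `N(b) ⊆ N(T)` for a tight `T ⊆ A`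
(`#N(T) ≤ #T`). By submodularity of `T ↦ #N(T)` tight subsets of `A` are closed under union, so a
largest one `S` contains them all, and then Hall for `B \ (A \ S)`, whose neighbourhood lies in
`N(S)`, gives `#B ≤ #S + #(A \ S) = #A`.
-/

section

variable {I O : Type*}

section Hall

variable [DecidableEq O] (C : I → Finset O)

def HallCondition (A : Finset I) : Prop :=
  ∀ T ⊆ A, #T ≤ #(T.biUnion C)

def IsTight (S : Finset I) : Prop :=
  #(S.biUnion C) ≤ #S

variable {C}

lemma HallCondition.isTight_union [DecidableEq I] {A S T : Finset I} (hA : HallCondition C A)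
    (hSA : S ⊆ A) (hS : IsTight C S) (hT : IsTight C T) :
    IsTight C (S ∪ T) := by
  have hinter : #(S ∩ T) ≤ #(S.biUnion C ∩ T.biUnion C) :=
    (hA _ (inter_subset_left.trans hSA)).trans <| card_le_card <| subset_inter
      (biUnion_subset_biUnion_of_subset_left C inter_subset_left)
      (biUnion_subset_biUnion_of_subset_left C inter_subset_right)
  have hN := card_union_add_card_inter (S.biUnion C) (T.biUnion C)
  have hST := card_union_add_card_inter S T
  unfold IsTight at *
  rw [union_biUnion]
  omega

lemma HallCondition.exists_isTight_forall_subset {A : Finset I} (hA : HallCondition C A) :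
    ∃ S ⊆ A, IsTight C S ∧ ∀ T ⊆ A, IsTight C T → T ⊆ S := by
  classical
  obtain ⟨S, hS, hmax⟩ :=
    exists_max_image (A.powerset.filter (IsTight C)) card ⟨∅, by simp [IsTight]⟩
  rw [mem_filter, mem_powerset] at hS
  refine ⟨S, hS.1, hS.2, fun T hTA hT => ?_⟩
  have hU := hmax (S ∪ T) (by simp [union_subset hS.1 hTA, hA.isTight_union hS.1 hS.2 hT])
  exact union_eq_left.mp (eq_of_subset_of_card_le subset_union_left hU).symm

lemma HallCondition.exists_isTight_of_not_insert [DecidableEq I] {A : Finset I} {b : I}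
    (hA : HallCondition C A) (hb : ¬ HallCondition C (insert b A)) :
    ∃ T ⊆ A, IsTight C T ∧ C b ⊆ T.biUnion C := by
  simp only [HallCondition, not_forall, not_le] at hb
  obtain ⟨T', hT'A, hlt⟩ := hb
  have hbT' : b ∈ T' := by
    by_contra hbT'
    exact (hA T' ((subset_insert_iff_of_notMem hbT').mp hT'A)).not_gt hlt
  have hTA : T'.erase b ⊆ A := subset_insert_iff.mp hT'A
  rw [← insert_erase hbT', biUnion_insert, card_insert_of_notMem (notMem_erase b T')] at hlt
  have hcover : (T'.erase b).biUnion C = C b ∪ (T'.erase b).biUnion C :=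
    eq_of_subset_of_card_le subset_union_right (by have := hA _ hTA; omega)
  refine ⟨T'.erase b, hTA, ?_, ?_⟩
  · rw [IsTight, hcover]
    omega
  · rw [hcover]
    exact subset_union_left

theorem HallCondition.exists_insert [DecidableEq I] {A B : Finset I} (hA : HallCondition C A)
    (hB : HallCondition C B) (hAB : #A < #B) : ∃ b ∈ B \ A, HallCondition C (insert b A) := by
  by_contra! hblocked
  obtain ⟨S, hSA, hS, hmax⟩ := hA.exists_isTight_forall_subset
  have hcover : (B \ (A \ S)).biUnion C ⊆ S.biUnion C := by
    refine biUnion_subset.mpr fun b hb => ?_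
    by_cases hbA : b ∈ A
    · exact subset_biUnion_of_mem C (by simp_all)
    · obtain ⟨T, hTA, hT, hbT⟩ :=
        hA.exists_isTight_of_not_insert (hblocked b (by simp_all))
      exact hbT.trans (biUnion_subset_biUnion_of_subset_left C (hmax T hTA hT))
  have hBS : #(B \ (A \ S)) ≤ #S := (hB _ sdiff_subset).trans ((card_le_card hcover).trans hS)
  have hB_le := card_le_card_sdiff_add_card (s := B) (t := A \ S)
  have hA_eq := card_sdiff_add_card_eq_card hSA
  omega

end Hall

section Matching

variable [DecidableEq I] {C : I → Finset O} {M M' : Finset (I × O)}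

lemma matchedIn_iff_mem_image_fst {i : I} : MatchedIn M i ↔ i ∈ M.image Prod.fst := by
  simp [MatchedIn]

lemma paretoDominates_iff_image_fst_ssubset :
    ParetoDominates M' M ↔ M.image Prod.fst ⊂ M'.image Prod.fst := by
  rw [ssubset_def, not_subset]
  simp only [ParetoDominates, matchedIn_iff_mem_image_fst, subset_iff]

lemma IsMatching.card_image_fst (hM : IsMatching C M) : #(M.image Prod.fst) = #M :=
  card_image_of_injOn fun m hm m' hm' h => hM.2.1 m hm m' hm' h

lemma IsMatching.hallCondition_image_fst [DecidableEq O] (hM : IsMatching C M) :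
    HallCondition C (M.image Prod.fst) := by
  intro T hT
  calc #T ≤ #(M.filter (·.1 ∈ T)) := card_le_card_of_surjOn Prod.fst fun i hi => by
        obtain ⟨m, hm, rfl⟩ := mem_image.mp (hT hi)
        exact ⟨m, mem_filter.mpr ⟨hm, hi⟩, rfl⟩
    _ ≤ #(T.biUnion C) := card_le_card_of_injOn Prod.snd
        (fun m hm => mem_biUnion.mpr ⟨m.1, (mem_filter.mp hm).2, hM.1 m (mem_filter.mp hm).1⟩)
        (fun m hm m' hm' h => hM.2.2 m (mem_filter.mp hm).1 m' (mem_filter.mp hm').1 h)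

lemma HallCondition.exists_isMatching [DecidableEq O] {A : Finset I} (hA : HallCondition C A) :
    ∃ M : Finset (I × O), IsMatching C M ∧ M.image Prod.fst = A := by
  obtain ⟨f, hf_inj, hf⟩ := (all_card_le_biUnion_card_iff_exists_injective fun i : A => C i).mp
    fun s => by
      have hs := hA (s.image Subtype.val) (image_subset_iff.mpr fun i _ => i.2)
      rwa [card_image_of_injective s Subtype.val_injective, image_biUnion] at hs
  refine ⟨A.attach.image fun i => (i.1, f i), ⟨?_, ?_, ?_⟩, ?_⟩
  · simp only [forall_mem_image]
    exact fun i _ => hf i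
  · simp only [forall_mem_image]
    intro i _ j _ h
    rw [Subtype.ext h]
  · simp only [forall_mem_image]
    intro i _ j _ h
    rw [hf_inj h]
  · ext i
    simp

end Matching

section Pareto

variable {C : I → Finset O} {M M' : Finset (I × O)}

lemma IsMatching.card_lt_of_paretoDominates (hM : IsMatching C M) (hM' : IsMatching C M')
    (h : ParetoDominates M' M) : #M < #M' := by
  classical
  rw [← hM.card_image_fst, ← hM'.card_image_fst]
  exact card_lt_card (paretoDominates_iff_image_fst_ssubset.mp h)

lemma IsMatching.exists_paretoDominates_of_card_lt (hM : IsMatching C M) (hM' : IsMatching C M')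
    (h : #M < #M') : ∃ N, IsMatching C N ∧ ParetoDominates N M := by
  classical
  rw [← hM.card_image_fst, ← hM'.card_image_fst] at h
  obtain ⟨b, hb, hAb⟩ := hM.hallCondition_image_fst.exists_insert hM'.hallCondition_image_fst h
  obtain ⟨N, hN, hNA⟩ := hAb.exists_isMatching
  exact ⟨N, hN,
    paretoDominates_iff_image_fst_ssubset.mpr (hNA ▸ ssubset_insert (mem_sdiff.mp hb).2)⟩

lemma IsMatching.not_exists_paretoDominates_iff (hM : IsMatching C M) :
    (¬ ∃ M', IsMatching C M' ∧ ParetoDominates M' M) ↔ ∀ M', IsMatching C M' → #M' ≤ #M := by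
  refine ⟨fun hne M' hM' => ?_, fun hmax ⟨M', hM', hdom⟩ => ?_⟩
  · by_contra! hlt
    exact hne (hM.exists_paretoDominates_of_card_lt hM' hlt)
  · exact (hmax M' hM').not_gt (hM.card_lt_of_paretoDominates hM' hdom)

end Pareto

end

theorem pareto_efficient_iff_maximum_matching_general
    {I O : Type*}
    (C : I → Finset O) (M : Finset (I × O)) (hM : IsMatching C M) :
    ((¬ ∃ M' : Finset (I × O), IsMatching C M' ∧ ParetoDominates M' M) ↔
      ∀ M' : Finset (I × O), IsMatching C M' → M'.card ≤ M.card) ∧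
    (∀ M₁ M₂ : Finset (I × O), IsMatching C M₁ → IsMatching C M₂ →
      (¬ ∃ M' : Finset (I × O), IsMatching C M' ∧ ParetoDominates M' M₁) →
      (¬ ∃ M' : Finset (I × O), IsMatching C M' ∧ ParetoDominates M' M₂) →
      M₁.card = M₂.card) :=
  ⟨hM.not_exists_paretoDominates_iff, fun M₁ M₂ h₁ h₂ he₁ he₂ =>
    le_antisymm (h₂.not_exists_paretoDominates_iff.mp he₂ M₁ h₁)
      (h₁.not_exists_paretoDominates_iff.mp he₁ M₂ h₂)⟩

/-- On the dichotomous domain, a matching admits no Pareto-dominating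
matching if and only if it has maximum cardinality among all matchings; in
particular, all Pareto efficient matchings have the same cardinality. -/
theorem pareto_efficient_iff_maximum_matching
    {I O : Type*} [Fintype I] [Fintype O] [DecidableEq I] [DecidableEq O]
    (C : I → Finset O) (M : Finset (I × O)) (hM : IsMatching C M) :
    ((¬ ∃ M' : Finset (I × O), IsMatching C M' ∧ ParetoDominates M' M) ↔
      ∀ M' : Finset (I × O), IsMatching C M' → M'.card ≤ M.card) ∧
    (∀ M₁ M₂ : Finset (I × O), IsMatching C M₁ → IsMatching C M₂ →
      (¬ ∃ M' : Finset (I × O), IsMatching C M' ∧ ParetoDominates M' M₁) →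
      (¬ ∃ M' : Finset (I × O), IsMatching C M' ∧ ParetoDominates M' M₂) →
      M₁.card = M₂.card) :=
  pareto_efficient_iff_maximum_matching_general C M hM
end
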